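/- If Ω is finite, φ separates points (φ(a,b) = 0 if and only if a = b), and there is a constant Q > 0 such that 1/i ≤ Q·W_i for every i ≥ 1, then the triangular gauge d_φ is a metric on Ω; in particular d_φ(a,b) > 0 whenever a ≠ b. -/

import Mathlib

open scoped BigOperators

/-- The set of weighted chain costs from `a` to `b`: a chain `a = c 0, c 1, …, c n = b`
with `n ≥ 1`, consecutive elements distinct (except that the single-edge chain `n = 1`
is always allowed, even when `a = b`), contributes the cost
`W n * ∑_{i<n} φ (c i) (c (i+1))`. -/
def gaugeSet {Ω : Type*} (φ : Ω → Ω → ℝ) (W : ℕ → ℝ) (a b : Ω) : Set ℝ :=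
  {x | ∃ n : ℕ, 1 ≤ n ∧ ∃ c : ℕ → Ω, c 0 = a ∧ c n = b ∧
    (n = 1 ∨ ∀ i < n, c i ≠ c (i + 1)) ∧
    x = W n * ∑ i ∈ Finset.range n, φ (c i) (c (i + 1))}

/-- The triangular gauge of the proximity function `φ` with weights `W`. -/
noncomputable def dGauge {Ω : Type*} (φ : Ω → Ω → ℝ) (W : ℕ → ℝ) (a b : Ω) : ℝ :=
  sInf (gaugeSet φ W a b)

/-!
Symmetry comes from reversing chains and the triangle inequality from concatenating them, since
`W` is antitone and a concatenated chain is longer than either piece. For positivity, every edge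
of a chain between distinct points has weight at least `ε := min_{x ≠ y} φ x y > 0` (`Ω` is
finite), so a chain of length `n` costs at least `W n * n * ε ≥ ε / Q`.
-/

open Finset

section Gauge

variable {Ω : Type*} {φ : Ω → Ω → ℝ} {W : ℕ → ℝ} {a b c : Ω}

lemma gaugeSet_nonempty (φ : Ω → Ω → ℝ) (W : ℕ → ℝ) (a b : Ω) :
    (gaugeSet φ W a b).Nonempty :=
  ⟨W 1 * φ a b, 1, le_rfl, fun i => if i = 0 then a else b, by simp, by simp, Or.inl rfl,
    by simp⟩

lemma mem_gaugeSet_iff_of_ne (hab : a ≠ b) {x : ℝ} :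
    x ∈ gaugeSet φ W a b ↔ ∃ n : ℕ, 1 ≤ n ∧ ∃ γ : ℕ → Ω, γ 0 = a ∧ γ n = b ∧
      (∀ i < n, γ i ≠ γ (i + 1)) ∧ x = W n * ∑ i ∈ range n, φ (γ i) (γ (i + 1)) := by
  constructor
  · rintro ⟨n, hn, γ, h0, hb, rfl | hne, rfl⟩
    · refine ⟨1, hn, γ, h0, hb, fun i hi => ?_, rfl⟩
      obtain rfl : i = 0 := by omega
      rwa [h0, hb]
    · exact ⟨n, hn, γ, h0, hb, hne, rfl⟩
  · rintro ⟨n, hn, γ, h0, hb, hne, rfl⟩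
    exact ⟨n, hn, γ, h0, hb, Or.inr hne, rfl⟩

section Nonneg

variable (hφ : ∀ a b, 0 ≤ φ a b) (hW : ∀ i, 1 ≤ i → 0 ≤ W i)
include hφ hW

lemma nonneg_of_mem_gaugeSet {x : ℝ} (hx : x ∈ gaugeSet φ W a b) : 0 ≤ x := by
  obtain ⟨n, hn, γ, -, -, -, rfl⟩ := hx
  exact mul_nonneg (hW n hn) (sum_nonneg fun i _ => hφ _ _)

lemma gaugeSet_bddBelow : BddBelow (gaugeSet φ W a b) :=
  ⟨0, fun _ => nonneg_of_mem_gaugeSet hφ hW⟩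

lemma dGauge_nonneg : 0 ≤ dGauge φ W a b :=
  le_csInf (gaugeSet_nonempty φ W a b) fun _ => nonneg_of_mem_gaugeSet hφ hW

lemma dGauge_self (hφ₀ : ∀ a, φ a a = 0) (a : Ω) : dGauge φ W a a = 0 := by
  have h₀ : (0 : ℝ) ∈ gaugeSet φ W a a :=
    ⟨1, le_rfl, fun _ => a, rfl, rfl, Or.inl rfl, by simp [hφ₀]⟩
  exact le_antisymm (csInf_le (gaugeSet_bddBelow hφ hW) h₀) (dGauge_nonneg hφ hW)

end Nonneg

lemma gaugeSet_subset_swap (hφ : ∀ a b, φ a b = φ b a) (a b : Ω) :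
    gaugeSet φ W a b ⊆ gaugeSet φ W b a := by
  rintro x ⟨n, hn, γ, h0, hb, hne, rfl⟩
  refine ⟨n, hn, fun i => γ (n - i), by simp [hb], by simp [h0], ?_, ?_⟩
  · refine hne.imp_right fun hne i hi heq => hne (n - (i + 1)) (by omega) ?_
    rw [show n - (i + 1) + 1 = n - i by omega]
    exact heq.symm
  · rw [← sum_range_reflect]
    refine congrArg _ (sum_congr rfl fun i hi => ?_)
    have hi := mem_range.1 hi
    dsimp only
    rw [show n - 1 - i + 1 = n - i by omega, show n - 1 - i = n - (i + 1) by omega, hφ]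

lemma dGauge_comm (hφ : ∀ a b, φ a b = φ b a) (a b : Ω) : dGauge φ W a b = dGauge φ W b a := by
  rw [dGauge, dGauge, (gaugeSet_subset_swap hφ a b).antisymm (gaugeSet_subset_swap hφ b a)]

lemma exists_seq_append (γ₁ γ₂ : ℕ → Ω) {n : ℕ} (h : γ₁ n = γ₂ 0) :
    ∃ γ : ℕ → Ω, (∀ i ≤ n, γ i = γ₁ i) ∧ ∀ i, γ (n + i) = γ₂ i := by
  refine ⟨fun i => if i ≤ n then γ₁ i else γ₂ (i - n), fun i hi => if_pos hi, fun i => ?_⟩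
  rcases Nat.eq_zero_or_pos i with rfl | hi
  · simpa using h
  · simp [show ¬n + i ≤ n by omega]

-- Only chains with distinct consecutive points can be concatenated; the loop `a → a` is not one.
lemma exists_mem_gaugeSet_le_add (hφ : ∀ a b, 0 ≤ φ a b) (hW : ∀ i j, 1 ≤ i → i ≤ j → W j ≤ W i)
    (hab : a ≠ b) (hbc : b ≠ c) {x y : ℝ} (hx : x ∈ gaugeSet φ W a b)
    (hy : y ∈ gaugeSet φ W b c) : ∃ z ∈ gaugeSet φ W a c, z ≤ x + y := by
  rw [mem_gaugeSet_iff_of_ne hab] at hx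
  rw [mem_gaugeSet_iff_of_ne hbc] at hy
  obtain ⟨n, hn, γ₁, h₁a, h₁b, hne₁, rfl⟩ := hx
  obtain ⟨m, hm, γ₂, h₂b, h₂c, hne₂, rfl⟩ := hy
  obtain ⟨γ, hγ₁, hγ₂⟩ := exists_seq_append γ₁ γ₂ (h₁b.trans h₂b.symm)
  set S₁ := ∑ i ∈ range n, φ (γ₁ i) (γ₁ (i + 1))
  set S₂ := ∑ i ∈ range m, φ (γ₂ i) (γ₂ (i + 1))
  have hsum : ∑ i ∈ range (n + m), φ (γ i) (γ (i + 1)) = S₁ + S₂ := by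
    rw [sum_range_add]
    congr 1
    · exact sum_congr rfl fun i hi => by
        rw [hγ₁ i (by simp at hi; omega), hγ₁ (i + 1) (by simp at hi; omega)]
    · exact sum_congr rfl fun i _ => by rw [hγ₂, add_assoc, hγ₂]
  have hne : ∀ i < n + m, γ i ≠ γ (i + 1) := by
    intro i hi
    by_cases hin : i < n
    · rw [hγ₁ i hin.le, hγ₁ (i + 1) hin]
      exact hne₁ i hin
    · obtain ⟨k, rfl⟩ := Nat.exists_eq_add_of_le (not_lt.1 hin)
      rw [hγ₂, add_assoc, hγ₂]
      exact hne₂ k (by omega)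
  refine ⟨W (n + m) * (S₁ + S₂), ⟨n + m, by omega, γ, ?_, ?_, Or.inr hne, by rw [hsum]⟩, ?_⟩
  · rw [hγ₁ 0 n.zero_le, h₁a]
  · rw [hγ₂, h₂c]
  · have hS₁ : 0 ≤ S₁ := sum_nonneg fun i _ => hφ _ _
    have hS₂ : 0 ≤ S₂ := sum_nonneg fun i _ => hφ _ _
    have h₁ := mul_le_mul_of_nonneg_right (hW n (n + m) hn (by omega)) hS₁
    have h₂ := mul_le_mul_of_nonneg_right (hW m (n + m) hm (by omega)) hS₂
    linarith

lemma dGauge_le_add (hφ : ∀ a b, 0 ≤ φ a b) (hφ₀ : ∀ a, φ a a = 0) (hW₀ : ∀ i, 1 ≤ i → 0 ≤ W i)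
    (hW : ∀ i j, 1 ≤ i → i ≤ j → W j ≤ W i) (a b c : Ω) :
    dGauge φ W a c ≤ dGauge φ W a b + dGauge φ W b c := by
  rcases eq_or_ne a b with rfl | hab
  · rw [dGauge_self hφ hW₀ hφ₀, zero_add]
  rcases eq_or_ne b c with rfl | hbc
  · rw [dGauge_self hφ hW₀ hφ₀, add_zero]
  rw [dGauge, dGauge, dGauge, ← csInf_add (gaugeSet_nonempty φ W a b) (gaugeSet_bddBelow hφ hW₀)
    (gaugeSet_nonempty φ W b c) (gaugeSet_bddBelow hφ hW₀)]
  refine le_csInf ((gaugeSet_nonempty φ W a b).add (gaugeSet_nonempty φ W b c)) ?_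
  rintro _ ⟨x, hx, y, hy, rfl⟩
  obtain ⟨z, hz, hzxy⟩ := exists_mem_gaugeSet_le_add hφ hW hab hbc hx hy
  exact (csInf_le (gaugeSet_bddBelow hφ hW₀) hz).trans hzxy

lemma exists_pos_le_of_ne [Finite Ω] (hφ : ∀ a b, a ≠ b → 0 < φ a b) :
    ∃ ε > 0, ∀ a b, a ≠ b → ε ≤ φ a b := by
  let s : Set (Ω × Ω) := {p | p.1 ≠ p.2}
  rcases s.eq_empty_or_nonempty with hs | hs
  · exact ⟨1, one_pos, fun a b hab => (Set.eq_empty_iff_forall_notMem.1 hs (a, b) hab).elim⟩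
  obtain ⟨p, hp, hmin⟩ := s.exists_min_image (fun p => φ p.1 p.2) s.toFinite hs
  exact ⟨φ p.1 p.2, hφ _ _ hp, fun a b hab => hmin (a, b) hab⟩

lemma div_le_of_mem_gaugeSet {ε Q x : ℝ} (hε₀ : 0 ≤ ε) (hε : ∀ a b, a ≠ b → ε ≤ φ a b)
    (hW₀ : ∀ i, 1 ≤ i → 0 ≤ W i) (hQ : 0 < Q) (hQW : ∀ i : ℕ, 1 ≤ i → 1 / (i : ℝ) ≤ Q * W i)
    (hab : a ≠ b) (hx : x ∈ gaugeSet φ W a b) : ε / Q ≤ x := by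
  obtain ⟨n, hn, γ, -, -, hne, rfl⟩ := (mem_gaugeSet_iff_of_ne hab).1 hx
  have hnW : 1 / Q ≤ n * W n := by
    have h := hQW n hn
    rw [div_le_iff₀ (by exact_mod_cast hn)] at h
    rw [div_le_iff₀ hQ]
    linarith
  have hsum : n * ε ≤ ∑ i ∈ range n, φ (γ i) (γ (i + 1)) := by
    simpa using card_nsmul_le_sum (range n) _ ε fun i hi => hε _ _ (hne i (mem_range.1 hi))
  calc ε / Q = ε * (1 / Q) := by ring
    _ ≤ ε * (n * W n) := mul_le_mul_of_nonneg_left hnW hε₀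
    _ = W n * (n * ε) := by ring
    _ ≤ W n * ∑ i ∈ range n, φ (γ i) (γ (i + 1)) := mul_le_mul_of_nonneg_left hsum (hW₀ n hn)

lemma dGauge_pos [Finite Ω] {Q : ℝ} (hφ : ∀ a b, a ≠ b → 0 < φ a b) (hW₀ : ∀ i, 1 ≤ i → 0 ≤ W i)
    (hQ : 0 < Q) (hQW : ∀ i : ℕ, 1 ≤ i → 1 / (i : ℝ) ≤ Q * W i) (hab : a ≠ b) :
    0 < dGauge φ W a b := by
  obtain ⟨ε, hε₀, hε⟩ := exists_pos_le_of_ne hφ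
  exact (div_pos hε₀ hQ).trans_le <| le_csInf (gaugeSet_nonempty φ W a b) fun _ =>
    div_le_of_mem_gaugeSet hε₀.le hε hW₀ hQ hQW hab

end Gauge

theorem dGauge_metric_general {Ω : Type*} [Fintype Ω]
    (φ : Ω → Ω → ℝ) (W : ℕ → ℝ)
    (hφ_nonneg : ∀ a b, 0 ≤ φ a b)
    (hφ_symm : ∀ a b, φ a b = φ b a)
    (hφ_sep : ∀ a b, φ a b = 0 ↔ a = b)
    (hW_pos : ∀ i, 1 ≤ i → 0 < W i)
    (hW_antitone : ∀ i j, 1 ≤ i → i ≤ j → W j ≤ W i)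
    (Q : ℝ) (hQ : 0 < Q)
    (hQW : ∀ i : ℕ, 1 ≤ i → 1 / (i : ℝ) ≤ Q * W i) :
    (∀ a b : Ω, dGauge φ W a b = 0 ↔ a = b) ∧
    (∀ a b : Ω, dGauge φ W a b = dGauge φ W b a) ∧
    (∀ a b c : Ω, dGauge φ W a c ≤ dGauge φ W a b + dGauge φ W b c) ∧
    (∀ a b : Ω, a ≠ b → 0 < dGauge φ W a b) := by
  have hφ₀ : ∀ a, φ a a = 0 := fun a => (hφ_sep a a).2 rfl
  have hφ_pos : ∀ a b, a ≠ b → 0 < φ a b := fun a b hab =>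
    (hφ_nonneg a b).lt_of_ne' fun h => hab ((hφ_sep a b).1 h)
  have hW₀ : ∀ i, 1 ≤ i → 0 ≤ W i := fun i hi => (hW_pos i hi).le
  have hpos : ∀ a b : Ω, a ≠ b → 0 < dGauge φ W a b := fun _ _ =>
    dGauge_pos hφ_pos hW₀ hQ hQW
  refine ⟨fun a b => ⟨fun h => ?_, ?_⟩, dGauge_comm hφ_symm,
    dGauge_le_add hφ_nonneg hφ₀ hW₀ hW_antitone, hpos⟩
  · by_contra hab
    exact (hpos a b hab).ne' h
  · rintro rfl
    exact dGauge_self hφ_nonneg hW₀ hφ₀ a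

/-- If `Ω` is finite, `φ` separates points, and `1/i ≤ Q * W i` for all `i ≥ 1`,
then the triangular gauge `d_φ` is a metric on `Ω`; in particular `d_φ a b > 0`
whenever `a ≠ b`. -/
theorem dGauge_metric {Ω : Type*} [Fintype Ω] [Nonempty Ω]
    (φ : Ω → Ω → ℝ) (W : ℕ → ℝ)
    (hφ_nonneg : ∀ a b, 0 ≤ φ a b)
    (hφ_symm : ∀ a b, φ a b = φ b a)
    (hφ_sep : ∀ a b, φ a b = 0 ↔ a = b)
    (hW_pos : ∀ i, 1 ≤ i → 0 < W i)
    (hW_le_one : ∀ i, 1 ≤ i → W i ≤ 1)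
    (hW_antitone : ∀ i j, 1 ≤ i → i ≤ j → W j ≤ W i)
    (Q : ℝ) (hQ : 0 < Q)
    (hQW : ∀ i : ℕ, 1 ≤ i → 1 / (i : ℝ) ≤ Q * W i) :
    (∀ a b : Ω, dGauge φ W a b = 0 ↔ a = b) ∧
    (∀ a b : Ω, dGauge φ W a b = dGauge φ W b a) ∧
    (∀ a b c : Ω, dGauge φ W a c ≤ dGauge φ W a b + dGauge φ W b c) ∧
    (∀ a b : Ω, a ≠ b → 0 < dGauge φ W a b) :=
  dGauge_metric_general φ W hφ_nonneg hφ_symm hφ_sep hW_pos hW_antitone Q hQ hQW
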